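/- Let C ⊆ ℤ² be an 8-path and let x be an 8-endpoint of C. Then |A(Γ(x)) ∩ Γ*(C)| = 1, i.e., Γ(x) has exactly one adjacent point in Γ*(C). -/
import Mathlib


open TopologicalSpace

/-- Basic (minimal) neighborhoods generating the Khalimsky topology on ℤ. -/
def khN (n : ℤ) : Set ℤ := if Odd n then {n} else {n - 1, n, n + 1}

/-- The Khalimsky (digital) topology on the integers. -/
def khLine : TopologicalSpace ℤ := generateFrom (Set.range khN)

/-- The Khalimsky topology on the digital plane ℤ × ℤ (product topology). -/
def khPlane : TopologicalSpace (ℤ × ℤ) :=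
  @instTopologicalSpaceProd ℤ ℤ khLine khLine

/-- A point of the digital plane is pure if both coordinates have the same parity. -/
def IsPure (p : ℤ × ℤ) : Prop := p.1 % 2 = p.2 % 2

/-- A point of the digital plane is mixed if it is not pure. -/
def IsMixed (p : ℤ × ℤ) : Prop := ¬ IsPure p

/-- A closed (pure) point: both coordinates even. -/
def IsClosedPt (p : ℤ × ℤ) : Prop := Even p.1 ∧ Even p.2

/-- An open (pure) point: both coordinates odd. -/
def IsOpenPt (p : ℤ × ℤ) : Prop := Odd p.1 ∧ Odd p.2

/-- The minimal open neighborhood N(x) of a point in the digital plane. -/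
def minN (x : ℤ × ℤ) : Set (ℤ × ℤ) := ⋂₀ {U : Set (ℤ × ℤ) | khPlane.IsOpen U ∧ x ∈ U}

/-- The closure cl(x) of a singleton in the digital plane. -/
def clPt (x : ℤ × ℤ) : Set (ℤ × ℤ) := @closure (ℤ × ℤ) khPlane {x}

/-- The adjacency set A(x) of a point of the digital plane. -/
def AdjSet (x : ℤ × ℤ) : Set (ℤ × ℤ) :=
  {y | y ≠ x ∧ @IsConnected (ℤ × ℤ) khPlane {x, y}}

/-- An arc: a subset of the digital plane homeomorphic (in the subspace topology)
to a finite interval of the Khalimsky line. -/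
def IsArc (C : Set (ℤ × ℤ)) : Prop :=
  ∃ a b : ℤ,
    Nonempty (@Homeomorph (↥C) (↥(Set.Icc a b))
      (TopologicalSpace.induced Subtype.val khPlane)
      (TopologicalSpace.induced Subtype.val khLine))

/-- z is an endpoint of the arc C: it has exactly one adjacent point within C. -/
def IsEndpointOf (z : ℤ × ℤ) (C : Set (ℤ × ℤ)) : Prop :=
  z ∈ C ∧ (AdjSet z ∩ C).encard = 1

/-- A Jordan curve in the digital plane. -/
def IsJordanCurve (J : Set (ℤ × ℤ)) : Prop :=
  @IsConnected (ℤ × ℤ) khPlane J ∧ 4 ≤ J.encard ∧ ∀ x ∈ J, IsArc (J \ {x})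

/-- The slant embedding Γ(x,y) = (x+y, y−x) of the Rosenfeld plane into the digital plane. -/
def Γmap (p : ℤ × ℤ) : ℤ × ℤ := (p.1 + p.2, p.2 - p.1)

/-- The operator Γ* turning subsets of ℤ² into subsets of the digital plane. -/
def ΓStar (A : Set (ℤ × ℤ)) : Set (ℤ × ℤ) :=
  Γmap '' A ∪
    {x | IsMixed x ∧ (minN x ⊆ Γmap '' A ∪ {x} ∨ clPt x ⊆ Γmap '' A ∪ {x})}

/-- 8-adjacency in ℤ². -/
def Adj8 (p q : ℤ × ℤ) : Prop := p ≠ q ∧ |p.1 - q.1| ≤ 1 ∧ |p.2 - q.2| ≤ 1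

/-- 4-adjacency in ℤ². -/
def Adj4 (p q : ℤ × ℤ) : Prop := p ≠ q ∧ |p.1 - q.1| + |p.2 - q.2| = 1

/-- The 8-neighbours of x within C. -/
def nbrs8 (C : Set (ℤ × ℤ)) (x : ℤ × ℤ) : Set (ℤ × ℤ) := {y ∈ C | Adj8 x y}

/-- The 4-neighbours of x within C. -/
def nbrs4 (C : Set (ℤ × ℤ)) (x : ℤ × ℤ) : Set (ℤ × ℤ) := {y ∈ C | Adj4 x y}

/-- x is an 8-endpoint of C. -/
def Is8Endpoint (C : Set (ℤ × ℤ)) (x : ℤ × ℤ) : Prop :=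
  x ∈ C ∧ (nbrs8 C x).encard = 1

/-- x is a 4-endpoint of C. -/
def Is4Endpoint (C : Set (ℤ × ℤ)) (x : ℤ × ℤ) : Prop :=
  x ∈ C ∧ (nbrs4 C x).encard = 1

/-- An 8-path: a finite set with exactly two 8-endpoints, every other point
having exactly two 8-adjacent points in the set. -/
def Is8Path (C : Set (ℤ × ℤ)) : Prop :=
  C.Finite ∧ {x | Is8Endpoint C x}.encard = 2 ∧
    ∀ x ∈ C, ¬ Is8Endpoint C x → (nbrs8 C x).encard = 2

/-- A 4-path. -/
def Is4Path (C : Set (ℤ × ℤ)) : Prop :=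
  C.Finite ∧ {x | Is4Endpoint C x}.encard = 2 ∧
    ∀ x ∈ C, ¬ Is4Endpoint C x → (nbrs4 C x).encard = 2

/-- A closed 8-curve: every point has exactly two 8-adjacent points in the set. -/
def Is8ClosedCurve (C : Set (ℤ × ℤ)) : Prop :=
  C.Finite ∧ ∀ x ∈ C, (nbrs8 C x).encard = 2

/-- A closed 4-curve. -/
def Is4ClosedCurve (C : Set (ℤ × ℤ)) : Prop :=
  C.Finite ∧ ∀ x ∈ C, (nbrs4 C x).encard = 2

/-- 8-connectedness: there is no partition into two nonempty pieces that are
not 8-adjacent to each other. -/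
def Conn8 (S : Set (ℤ × ℤ)) : Prop :=
  ¬ ∃ A B : Set (ℤ × ℤ), A.Nonempty ∧ B.Nonempty ∧ A ∪ B = S ∧ A ∩ B = ∅ ∧
      ∀ a ∈ A, ∀ b ∈ B, ¬ Adj8 a b

/-- 4-connectedness. -/
def Conn4 (S : Set (ℤ × ℤ)) : Prop :=
  ¬ ∃ A B : Set (ℤ × ℤ), A.Nonempty ∧ B.Nonempty ∧ A ∪ B = S ∧ A ∩ B = ∅ ∧
      ∀ a ∈ A, ∀ b ∈ B, ¬ Adj4 a b

/-- T is a 4-component of S: a maximal 4-connected subset of S. -/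
def Is4CompOf (T S : Set (ℤ × ℤ)) : Prop :=
  T ⊆ S ∧ Conn4 T ∧ ∀ T' : Set (ℤ × ℤ), T ⊆ T' → T' ⊆ S → Conn4 T' → T' = T

/-- U is a connected component of S in the digital plane. -/
def IsCompOf (U S : Set (ℤ × ℤ)) : Prop :=
  ∃ x ∈ S, @connectedComponentIn (ℤ × ℤ) khPlane S x = U

/-- The set S_J of mixed points of Γ*(Γ⁻¹(J)) having exactly three adjacent points in J. -/
def SJ (J : Set (ℤ × ℤ)) : Set (ℤ × ℤ) :=
  {m | m ∈ ΓStar (Γmap ⁻¹' J) ∧ IsMixed m ∧ (AdjSet m ∩ J).encard = 3}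

-- ### Auxiliary lemmas

lemma mem_khN_iff {m n : ℤ} :
    m ∈ khN n ↔ ((n % 2 = 0 ∧ (m = n - 1 ∨ m = n ∨ m = n + 1)) ∨ (n % 2 = 1 ∧ m = n)) := by
  unfold khN
  by_cases h : Odd n
  · have := Int.odd_iff.mp h
    simp only [if_pos h, Set.mem_singleton_iff]
    omega
  · have h2 : n % 2 = 0 := Int.even_iff.mp (Int.not_odd_iff_even.mp h)
    simp only [if_neg h, Set.mem_insert_iff, Set.mem_singleton_iff]
    omega

lemma khN_open (n : ℤ) : khLine.IsOpen (khN n) :=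
  TopologicalSpace.isOpen_generateFrom_of_mem ⟨n, rfl⟩

lemma khN_subset_of_isOpen {U : Set ℤ} (hU : khLine.IsOpen U) : ∀ n ∈ U, khN n ⊆ U := by
  have hU' : TopologicalSpace.GenerateOpen (Set.range khN) U := hU
  clear hU
  induction hU' with
  | basic V hV =>
    obtain ⟨m, rfl⟩ := hV
    intro n hn k hk
    rw [mem_khN_iff] at *
    omega
  | univ => exact fun n _ _ _ => trivial
  | inter V W _ _ ihV ihW => exact fun n hn => Set.subset_inter (ihV n hn.1) (ihW n hn.2)
  | sUnion S hS ih =>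
    intro n hn
    obtain ⟨t, ht, hnt⟩ := hn
    exact (ih t ht n hnt).trans (Set.subset_sUnion_of_mem ht)

/-- The candidate minimal neighborhood in the plane. -/
def NN (p : ℤ × ℤ) : Set (ℤ × ℤ) := khN p.1 ×ˢ khN p.2

lemma mem_NN {q p : ℤ × ℤ} : q ∈ NN p ↔ q.1 ∈ khN p.1 ∧ q.2 ∈ khN p.2 := Iff.rfl

lemma mem_khN_self (n : ℤ) : n ∈ khN n := by rw [mem_khN_iff]; omega

lemma mem_NN_self (p : ℤ × ℤ) : p ∈ NN p := ⟨mem_khN_self _, mem_khN_self _⟩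

lemma NN_isOpen (p : ℤ × ℤ) : khPlane.IsOpen (NN p) :=
  @IsOpen.prod ℤ ℤ khLine khLine _ _ (khN_open p.1) (khN_open p.2)

lemma NN_min {U : Set (ℤ × ℤ)} (hU : khPlane.IsOpen U) {p : ℤ × ℤ} (hp : p ∈ U) :
    NN p ⊆ U := by
  letI : TopologicalSpace ℤ := khLine
  have hU' : IsOpen U := hU
  rw [isOpen_prod_iff] at hU'
  obtain ⟨u, v, hu, hv, h1, h2, hsub⟩ := hU' p.1 p.2 hp
  intro q hq
  exact hsub ⟨khN_subset_of_isOpen hu _ h1 hq.1, khN_subset_of_isOpen hv _ h2 hq.2⟩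

lemma minN_eq (p : ℤ × ℤ) : minN p = NN p := by
  apply subset_antisymm
  · exact Set.sInter_subset_of_mem ⟨NN_isOpen p, mem_NN_self p⟩
  · intro q hq U hU
    exact NN_min hU.1 hU.2 hq

lemma mem_clPt_iff {p q : ℤ × ℤ} : q ∈ clPt p ↔ p ∈ NN q := by
  letI : TopologicalSpace (ℤ × ℤ) := khPlane
  show q ∈ closure {p} ↔ p ∈ NN q
  rw [mem_closure_iff]
  constructor
  · intro h
    obtain ⟨r, hr1, hr2⟩ := h (NN q) (NN_isOpen q) (mem_NN_self q)
    rwa [Set.mem_singleton_iff.mp hr2] at hr1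
  · intro h o ho hq
    exact ⟨p, NN_min ho hq h, rfl⟩

lemma pair_conn_iff (p q : ℤ × ℤ) :
    @IsConnected (ℤ × ℤ) khPlane {p, q} ↔ q ∈ NN p ∨ p ∈ NN q := by
  letI : TopologicalSpace (ℤ × ℤ) := khPlane
  show IsConnected {p, q} ↔ q ∈ NN p ∨ p ∈ NN q
  constructor
  · intro h
    by_contra hc
    push_neg at hc
    obtain ⟨_, hpre⟩ := h
    obtain ⟨z, hz, hz1, hz2⟩ := hpre (NN p) (NN q) (NN_isOpen p) (NN_isOpen q)
      (fun r hr => by rcases hr with rfl | rfl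
                      · exact Or.inl (mem_NN_self _)
                      · exact Or.inr (mem_NN_self _))
      ⟨p, Set.mem_insert _ _, mem_NN_self p⟩
      ⟨q, Set.mem_insert_of_mem _ rfl, mem_NN_self q⟩
    rcases hz with rfl | rfl
    · exact hc.2 hz2
    · exact hc.1 hz1
  · intro h
    rcases h with h | h
    · have hcl : p ∈ closure {q} := mem_closure_iff.mpr fun o ho hp => ⟨q, NN_min ho hp h, rfl⟩
      have := (isConnected_singleton (x := q)).subset_closure
        (by simp : ({q} : Set (ℤ × ℤ)) ⊆ {p, q})
        (by intro r hr
            rcases hr with rfl | rfl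
            · exact hcl
            · exact subset_closure rfl)
      exact this
    · have hcl : q ∈ closure {p} := mem_closure_iff.mpr fun o ho hq => ⟨p, NN_min ho hq h, rfl⟩
      exact (isConnected_singleton (x := p)).subset_closure
        (by simp : ({p} : Set (ℤ × ℤ)) ⊆ {p, q})
        (by intro r hr
            rcases hr with rfl | rfl
            · exact subset_closure rfl
            · exact hcl)

lemma mem_Γimg {C : Set (ℤ × ℤ)} {z : ℤ × ℤ} :
    z ∈ Γmap '' C ↔ ∃ w ∈ C, w.1 + w.2 = z.1 ∧ w.2 - w.1 = z.2 := by
  constructor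
  · rintro ⟨w, hw, rfl⟩; exact ⟨w, hw, rfl, rfl⟩
  · rintro ⟨w, hw, h1, h2⟩
    exact ⟨w, hw, by rw [Γmap, Prod.ext_iff]; exact ⟨h1, h2⟩⟩

lemma mem_Γimg' {C : Set (ℤ × ℤ)} {a b : ℤ} :
    (a, b) ∈ Γmap '' C ↔ ∃ w ∈ C, w.1 + w.2 = a ∧ w.2 - w.1 = b := mem_Γimg

lemma mem_adjΓ (x z : ℤ × ℤ) :
    z ∈ AdjSet (Γmap x) ↔ z ≠ Γmap x ∧
      (x.1 + x.2) - 1 ≤ z.1 ∧ z.1 ≤ (x.1 + x.2) + 1 ∧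
      (x.2 - x.1) - 1 ≤ z.2 ∧ z.2 ≤ (x.2 - x.1) + 1 := by
  simp only [AdjSet, Set.mem_setOf_eq]
  rw [pair_conn_iff]
  simp only [mem_NN, mem_khN_iff, Γmap, ne_eq, Prod.ext_iff, not_and]
  omega

lemma mixed_cond_iff (C : Set (ℤ × ℤ)) (z : ℤ × ℤ) (hz : ¬ z.1 % 2 = z.2 % 2) :
    (minN z ⊆ Γmap '' C ∪ {z} ∨ clPt z ⊆ Γmap '' C ∪ {z}) ↔
      (((z.1 - 1, z.2) ∈ Γmap '' C ∧ (z.1 + 1, z.2) ∈ Γmap '' C) ∨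
       ((z.1, z.2 - 1) ∈ Γmap '' C ∧ (z.1, z.2 + 1) ∈ Γmap '' C)) := by
  have e1 : ¬ ((z.1 - 1, z.2) = z) := by rw [Prod.ext_iff]; simp
  have e2 : ¬ ((z.1 + 1, z.2) = z) := by rw [Prod.ext_iff]; simp
  have e3 : ¬ ((z.1, z.2 - 1) = z) := by rw [Prod.ext_iff]; simp
  have e4 : ¬ ((z.1, z.2 + 1) = z) := by rw [Prod.ext_iff]; simp
  rcases Int.emod_two_eq_zero_or_one z.1 with hz1 | hz1
  · have hz2 : z.2 % 2 = 1 := by omega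
    have hmin : minN z = {(z.1 - 1, z.2), z, (z.1 + 1, z.2)} := by
      rw [minN_eq]; ext w
      simp only [NN, Set.mem_prod, mem_khN_iff, Set.mem_insert_iff, Set.mem_singleton_iff,
        Prod.ext_iff]
      omega
    have hcl : clPt z = {(z.1, z.2 - 1), z, (z.1, z.2 + 1)} := by
      ext w
      rw [mem_clPt_iff]
      simp only [NN, Set.mem_prod, mem_khN_iff, Set.mem_insert_iff, Set.mem_singleton_iff,
        Prod.ext_iff]
      omega
    rw [hmin, hcl]
    simp only [Set.insert_subset_iff, Set.singleton_subset_iff, Set.mem_union,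
      Set.mem_singleton_iff, e1, e2, e3, e4, or_false, or_true, true_and, and_true]
  · have hz2 : z.2 % 2 = 0 := by omega
    have hmin : minN z = {(z.1, z.2 - 1), z, (z.1, z.2 + 1)} := by
      rw [minN_eq]; ext w
      simp only [NN, Set.mem_prod, mem_khN_iff, Set.mem_insert_iff, Set.mem_singleton_iff,
        Prod.ext_iff]
      omega
    have hcl : clPt z = {(z.1 - 1, z.2), z, (z.1 + 1, z.2)} := by
      ext w
      rw [mem_clPt_iff]
      simp only [NN, Set.mem_prod, mem_khN_iff, Set.mem_insert_iff, Set.mem_singleton_iff,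
        Prod.ext_iff]
      omega
    rw [hmin, hcl]
    simp only [Set.insert_subset_iff, Set.singleton_subset_iff, Set.mem_union,
      Set.mem_singleton_iff, e1, e2, e3, e4, or_false, or_true, true_and, and_true]
    tauto

lemma mem_ΓStar_iff {C : Set (ℤ × ℤ)} {z : ℤ × ℤ} :
    z ∈ ΓStar C ↔ z ∈ Γmap '' C ∨ (¬ z.1 % 2 = z.2 % 2 ∧
      (((z.1 - 1, z.2) ∈ Γmap '' C ∧ (z.1 + 1, z.2) ∈ Γmap '' C) ∨
       ((z.1, z.2 - 1) ∈ Γmap '' C ∧ (z.1, z.2 + 1) ∈ Γmap '' C))) := by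
  unfold ΓStar IsMixed IsPure
  simp only [Set.mem_union, Set.mem_setOf_eq]
  constructor
  · rintro (h | ⟨h1, h2⟩)
    · exact Or.inl h
    · exact Or.inr ⟨h1, (mixed_cond_iff C z h1).mp h2⟩
  · rintro (h | ⟨h1, h2⟩)
    · exact Or.inl h
    · exact Or.inr ⟨h1, (mixed_cond_iff C z h1).mpr h2⟩

/-- If C is an 8-path and x is an 8-endpoint of C, then Γ(x) has exactly one
adjacent point in Γ*(C). -/
theorem endpoint_adj_card_one (C : Set (ℤ × ℤ)) (x : ℤ × ℤ)
    (hC : Is8Path C) (hx : Is8Endpoint C x) :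
    (AdjSet (Γmap x) ∩ ΓStar C).encard = 1 := by
  obtain ⟨hxC, hcard⟩ := hx
  rw [Set.encard_eq_one] at hcard ⊢
  obtain ⟨y, hy⟩ := hcard
  have hymem : y ∈ nbrs8 C x := by rw [hy]; rfl
  obtain ⟨hyC, hxy, hs, ht⟩ := hymem
  rw [abs_le] at hs ht
  have huniq : ∀ w, w ∈ C → w ≠ x → |x.1 - w.1| ≤ 1 → |x.2 - w.2| ≤ 1 → w = y := by
    intro w hw h1 h2 h3
    have : w ∈ nbrs8 C x := ⟨hw, fun he => h1 he.symm, h2, h3⟩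
    rwa [hy, Set.mem_singleton_iff] at this
  have hxy1 : ¬(x.1 = y.1 ∧ x.2 = y.2) := fun hh => hxy (Prod.ext_iff.mpr hh)
  refine ⟨(x.1 + x.2 + max (-1) (min 1 (y.1 + y.2 - x.1 - x.2)),
           x.2 - x.1 + max (-1) (min 1 (y.2 - y.1 - x.2 + x.1))), ?_⟩
  ext z
  rw [Set.mem_inter_iff, mem_adjΓ, mem_ΓStar_iff, Set.mem_singleton_iff]
  constructor
  · rintro ⟨⟨hne, hb1, hb2, hb3, hb4⟩, hstar⟩
    have hne' : ¬(z.1 = x.1 + x.2 ∧ z.2 = x.2 - x.1) := fun hh => hne (Prod.ext_iff.mpr hh)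
    rcases hstar with himg | ⟨hmix, hpair⟩
    · obtain ⟨w, hwC, hw1, hw2⟩ := mem_Γimg.mp himg
      have hwx : w ≠ x := by
        rintro rfl
        exact hne' ⟨by omega, by omega⟩
      have hwy := huniq w hwC hwx (by rw [abs_le]; omega) (by rw [abs_le]; omega)
      subst hwy
      rw [Prod.ext_iff]
      constructor <;> omega
    · rcases hpair with ⟨hL, hR⟩ | ⟨hL, hR⟩
      · obtain ⟨u, huC, hu1, hu2⟩ := mem_Γimg'.mp hL
        obtain ⟨v, hvC, hv1, hv2⟩ := mem_Γimg'.mp hR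
        have hu' : (u.1 = x.1 ∧ u.2 = x.2) ∨ (u.1 = y.1 ∧ u.2 = y.2) := by
          by_cases h : u = x
          · subst h; exact Or.inl ⟨rfl, rfl⟩
          · have := huniq u huC h (by rw [abs_le]; omega) (by rw [abs_le]; omega)
            subst this; exact Or.inr ⟨rfl, rfl⟩
        have hv' : (v.1 = x.1 ∧ v.2 = x.2) ∨ (v.1 = y.1 ∧ v.2 = y.2) := by
          by_cases h : v = x
          · subst h; exact Or.inl ⟨rfl, rfl⟩
          · have := huniq v hvC h (by rw [abs_le]; omega) (by rw [abs_le]; omega)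
            subst this; exact Or.inr ⟨rfl, rfl⟩
        rw [Prod.ext_iff]
        constructor <;> omega
      · obtain ⟨u, huC, hu1, hu2⟩ := mem_Γimg'.mp hL
        obtain ⟨v, hvC, hv1, hv2⟩ := mem_Γimg'.mp hR
        have hu' : (u.1 = x.1 ∧ u.2 = x.2) ∨ (u.1 = y.1 ∧ u.2 = y.2) := by
          by_cases h : u = x
          · subst h; exact Or.inl ⟨rfl, rfl⟩
          · have := huniq u huC h (by rw [abs_le]; omega) (by rw [abs_le]; omega)
            subst this; exact Or.inr ⟨rfl, rfl⟩
        have hv' : (v.1 = x.1 ∧ v.2 = x.2) ∨ (v.1 = y.1 ∧ v.2 = y.2) := by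
          by_cases h : v = x
          · subst h; exact Or.inl ⟨rfl, rfl⟩
          · have := huniq v hvC h (by rw [abs_le]; omega) (by rw [abs_le]; omega)
            subst this; exact Or.inr ⟨rfl, rfl⟩
        rw [Prod.ext_iff]
        constructor <;> omega
  · intro hz
    have hz1 : z.1 = x.1 + x.2 + max (-1) (min 1 (y.1 + y.2 - x.1 - x.2)) := by rw [hz]
    have hz2 : z.2 = x.2 - x.1 + max (-1) (min 1 (y.2 - y.1 - x.2 + x.1)) := by rw [hz]
    refine ⟨⟨?_, by omega, by omega, by omega, by omega⟩, ?_⟩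
    · intro h
      have h1 : z.1 = x.1 + x.2 := by rw [h]; rfl
      have h2 : z.2 = x.2 - x.1 := by rw [h]; rfl
      omega
    · have h5 : (y.1 - x.1 = 1 ∧ y.2 - x.2 = 1) ∨ (y.1 - x.1 = -1 ∧ y.2 - x.2 = -1) ∨
                (y.1 - x.1 = 1 ∧ y.2 - x.2 = -1) ∨ (y.1 - x.1 = -1 ∧ y.2 - x.2 = 1) ∨
                ((y.1 = x.1 ∨ y.2 = x.2) ∧ ¬(y.1 = x.1 ∧ y.2 = x.2)) := by omega
      rcases h5 with ⟨e1, e2⟩ | ⟨e1, e2⟩ | ⟨e1, e2⟩ | ⟨e1, e2⟩ | ⟨e1, e2⟩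
      · exact Or.inr ⟨by omega, Or.inl ⟨mem_Γimg'.mpr ⟨x, hxC, by omega, by omega⟩,
          mem_Γimg'.mpr ⟨y, hyC, by omega, by omega⟩⟩⟩
      · exact Or.inr ⟨by omega, Or.inl ⟨mem_Γimg'.mpr ⟨y, hyC, by omega, by omega⟩,
          mem_Γimg'.mpr ⟨x, hxC, by omega, by omega⟩⟩⟩
      · exact Or.inr ⟨by omega, Or.inr ⟨mem_Γimg'.mpr ⟨y, hyC, by omega, by omega⟩,
          mem_Γimg'.mpr ⟨x, hxC, by omega, by omega⟩⟩⟩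
      · exact Or.inr ⟨by omega, Or.inr ⟨mem_Γimg'.mpr ⟨x, hxC, by omega, by omega⟩,
          mem_Γimg'.mpr ⟨y, hyC, by omega, by omega⟩⟩⟩
      · exact Or.inl (mem_Γimg.mpr ⟨y, hyC, by omega, by omega⟩)
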